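/- Suppose X is a k-large simplicial complex and S¹_m denotes the triangulation of the circle S¹ with m edges. If m < k, then every simplicial map f : S¹_m → X extends to a simplicial map from the disc D², triangulated so that the triangulation of its boundary is S¹_m and so that D² has no interior vertices. -/

import Mathlib

open Set Topology
open scoped Classical

noncomputable section

/-! ## Combinatorial 2-complexes

We model a combinatorial 2-complex on a topological space `α` by recording its
set of 0-cells (vertices) and its sets of closed 1-cells and closed 2-cells,
each regarded as subsets of `α`. -/

structure TwoComplexOn (α : Type*) [TopologicalSpace α] : Type _ where
  cell0 : Set α
  cell1 : Set (Set α)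
  cell2 : Set (Set α)

namespace TwoComplexOn

variable {α : Type*} [TopologicalSpace α]

/-- The underlying set of the 1-skeleton. -/
def oneSkeleton (X : TwoComplexOn α) : Set α := X.cell0 ∪ ⋃₀ X.cell1

/-- The underlying set of the whole complex. -/
def support (X : TwoComplexOn α) : Set α := X.cell0 ∪ ⋃₀ X.cell1 ∪ ⋃₀ X.cell2

/-- A *piece* of `X`: the image of a nontrivial combinatorial path (a connected
subcomplex of the 1-skeleton containing at least one 1-cell) that is contained
in the boundaries of two distinct 2-cells of `X`. -/
def IsPiece (X : TwoComplexOn α) (p : Set α) : Prop :=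
  IsConnected p ∧ p ⊆ X.oneSkeleton ∧ (∃ e ∈ X.cell1, e ⊆ p) ∧
    ∃ R₁ ∈ X.cell2, ∃ R₂ ∈ X.cell2, R₁ ≠ R₂ ∧ p ⊆ frontier R₁ ∧ p ⊆ frontier R₂

/-- The small cancellation condition `C(p)`: the boundary of a 2-cell is never
a concatenation of fewer than `p` pieces; equivalently, the boundary of a
2-cell cannot be covered by fewer than `p` pieces. -/
def SatC (X : TwoComplexOn α) (p : ℕ) : Prop :=
  ∀ R ∈ X.cell2, ∀ P : Finset (Set α), (∀ q ∈ P, X.IsPiece q) →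
    frontier R ⊆ ⋃₀ ↑P → p ≤ P.card

/-- The valence of a 0-cell: the number of 1-cells incident to it. -/
def valence (X : TwoComplexOn α) (v : α) : ℕ := {e ∈ X.cell1 | v ∈ e}.ncard

/-- `E` is a subcomplex of `X`. -/
def Subcomplex (E X : TwoComplexOn α) : Prop :=
  E.cell0 ⊆ X.cell0 ∧ E.cell1 ⊆ X.cell1 ∧ E.cell2 ⊆ X.cell2

/-- The 2-cells of `X` distinct from `F` meeting `F`. -/
def neighbors (X : TwoComplexOn α) (F : Set α) : Set (Set α) :=
  {F' | F' ∈ X.cell2 ∧ F' ≠ F ∧ (F ∩ F').Nonempty}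

/-- A gallery: a sequence of pairwise distinct 2-cells in which consecutive
2-cells intersect. -/
def IsGallery (X : TwoComplexOn α) (l : List (Set α)) : Prop :=
  l ≠ [] ∧ l.Nodup ∧ (∀ F ∈ l, F ∈ X.cell2) ∧
    l.Chain' (fun F F' => (F ∩ F').Nonempty)

/-- The gallery distance between two 2-cells: the least number of 2-cells in a
gallery joining them. -/
noncomputable def galleryDist (X : TwoComplexOn α) (F F' : Set α) : ℕ :=
  sInf {n | ∃ l : List (Set α), X.IsGallery l ∧ l.length = n ∧
    l.head? = some F ∧ l.getLast? = some F'}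

end TwoComplexOn

/-- A combinatorial map between 2-complexes. -/
structure CombMap {α β : Type*} [TopologicalSpace α] [TopologicalSpace β]
    (X : TwoComplexOn α) (Y : TwoComplexOn β) where
  toFun : α → β
  continuous : Continuous toFun
  map0 : ∀ v ∈ X.cell0, toFun v ∈ Y.cell0
  map1 : ∀ e ∈ X.cell1, toFun '' e ∈ Y.cell1
  map2 : ∀ f ∈ X.cell2, toFun '' f ∈ Y.cell2

/-- A disc diagram: a contractible finite 2-complex with a specified embedding
into the plane. -/
structure DiscDiagram : Type 1 where
  carrier : Type
  top : TopologicalSpace carrier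
  complex : @TwoComplexOn carrier top
  finite0 : complex.cell0.Finite
  finite1 : complex.cell1.Finite
  finite2 : complex.cell2.Finite
  contractible : @ContractibleSpace carrier top
  embed : carrier → ℝ × ℝ
  embedding : @Topology.IsEmbedding carrier (ℝ × ℝ) top _ embed

attribute [instance] DiscDiagram.top

/-- A 0-cell of a disc diagram is internal if its image lies in the interior of
the image of the diagram in the plane. -/
def DiscDiagram.Internal (D : DiscDiagram) (v : D.carrier) : Prop :=
  D.embed v ∈ interior (Set.range D.embed)

/-- The small cancellation condition `T(q)`: no reduced disc diagram over `X`
has an internal 0-cell `v` with `2 < δ(v) < q`. -/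
def TwoComplexOn.SatT {α : Type*} [TopologicalSpace α] (X : TwoComplexOn α) (q : ℕ) : Prop :=
  ∀ (D : DiscDiagram) (φ : CombMap D.complex X),
    (∀ p, D.complex.IsPiece p → X.IsPiece (φ.toFun '' p)) →
    ∀ v ∈ D.complex.cell0, D.Internal v →
      ¬(2 < D.complex.valence v ∧ D.complex.valence v < q)

/-! ## Actions on 2-complexes -/

/-- An action of an (additive) group `G` on the complex `X` by cellular
automorphisms, given by a homomorphism-like family of homeomorphisms. -/
def IsCellularAction {α : Type*} [TopologicalSpace α] {G : Type*} [AddGroup G]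
    (X : TwoComplexOn α) (ρ : G → α ≃ₜ α) : Prop :=
  (∀ g h : G, ρ (g + h) = (ρ g).trans (ρ h)) ∧
  (∀ g : G, ∀ v ∈ X.cell0, ρ g v ∈ X.cell0) ∧
  (∀ g : G, ∀ e ∈ X.cell1, ⇑(ρ g) '' e ∈ X.cell1) ∧
  (∀ g : G, ∀ F ∈ X.cell2, ⇑(ρ g) '' F ∈ X.cell2)

/-- A subcomplex is invariant under the action `ρ`. -/
def InvariantSubcomplex {α : Type*} [TopologicalSpace α] {G : Type*}
    (E : TwoComplexOn α) (ρ : G → α ≃ₜ α) : Prop :=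
  ∀ g : G, (∀ v ∈ E.cell0, ρ g v ∈ E.cell0) ∧
    (∀ e ∈ E.cell1, ⇑(ρ g) '' e ∈ E.cell1) ∧
    (∀ F ∈ E.cell2, ⇑(ρ g) '' F ∈ E.cell2)

/-- Proper action: every compact set meets only finitely many of its translates. -/
def ProperAction {α : Type*} [TopologicalSpace α] {G : Type*} (ρ : G → α ≃ₜ α) : Prop :=
  ∀ K : Set α, IsCompact K → {g : G | (⇑(ρ g) '' K ∩ K).Nonempty}.Finite

/-- Metrically proper action: every bounded set meets only finitely many of its
translates. -/
def MetricallyProperAction {α : Type*} [MetricSpace α] {G : Type*}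
    (ρ : G → α ≃ₜ α) : Prop :=
  ∀ B : Set α, Bornology.IsBounded B → {g : G | (⇑(ρ g) '' B ∩ B).Nonempty}.Finite

/-- Semisimple action: every element attains its translation length. -/
def SemisimpleAction {α : Type*} [MetricSpace α] {G : Type*} (ρ : G → α ≃ₜ α) : Prop :=
  ∀ g : G, ∃ x : α, dist x (ρ g x) = ⨅ y : α, dist y (ρ g y)

/-! ## The Euclidean plane and its triangular tiling -/

/-- The Euclidean plane. -/
abbrev EPlane : Type := EuclideanSpace ℝ (Fin 2)

/-- The vertices of the standard unit equilateral triangular tiling `E²_△`. -/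
noncomputable def triPoint (z : ℤ × ℤ) : EPlane :=
  (WithLp.toLp 2 ![(z.1 : ℝ) + (z.2 : ℝ) / 2, (z.2 : ℝ) * (Real.sqrt 3 / 2)] : EuclideanSpace ℝ (Fin 2))

def triVertices : Set EPlane := Set.range triPoint

def triEdges : Set (Set EPlane) :=
  {e | ∃ u ∈ triVertices, ∃ v ∈ triVertices, dist u v = 1 ∧ e = segment ℝ u v}

def triFaces : Set (Set EPlane) :=
  {f | ∃ u ∈ triVertices, ∃ v ∈ triVertices, ∃ w ∈ triVertices,
    dist u v = 1 ∧ dist v w = 1 ∧ dist u w = 1 ∧ f = convexHull ℝ {u, v, w}}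

/-- A flat in a `C(3)-T(6)` complex: an isometric embedding of the standard
equilateral triangular tiling of the Euclidean plane, sending cells to cells. -/
def IsFlat36 {α : Type*} [MetricSpace α] (X : TwoComplexOn α) (f : EPlane → α) : Prop :=
  Isometry f ∧ (∀ v ∈ triVertices, f v ∈ X.cell0) ∧
    (∀ e ∈ triEdges, f '' e ∈ X.cell1) ∧ (∀ F ∈ triFaces, f '' F ∈ X.cell2)

/-- The regular Euclidean `n`-gon with unit side lengths. -/
noncomputable def regularNgon (n : ℕ) : Set EPlane :=
  convexHull ℝ (Set.range fun k : Fin n =>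
    (WithLp.toLp 2 ![(2 * Real.sin (Real.pi / n))⁻¹ * Real.cos (2 * Real.pi * k / n),
       (2 * Real.sin (Real.pi / n))⁻¹ * Real.sin (2 * Real.pi * k / n)] :
      EuclideanSpace ℝ (Fin 2)))

/-- The metric of `α` restricts on the complex `X` to the standard small
cancellation metric: every 1-cell is isometric to a unit interval and every
2-cell is isometric to a regular Euclidean polygon with unit side lengths. -/
def IsStandardMetric {α : Type*} [MetricSpace α] (X : TwoComplexOn α) : Prop :=
  (∀ e ∈ X.cell1, ∃ γ : (Set.Icc (0 : ℝ) 1) → α, Isometry γ ∧ Set.range γ = e) ∧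
  (∀ F ∈ X.cell2, ∃ n : ℕ, 3 ≤ n ∧ ∃ φ : (regularNgon n) → α, Isometry φ ∧ Set.range φ = F)

/-! ## Flat planes and flats in `C(6)` complexes -/

/-- A flat plane: a `C(6)` complex homeomorphic to the Euclidean plane in which
every closed 2-cell meets exactly six neighbouring closed 2-cells. -/
def IsFlatPlaneC6 {α : Type*} [TopologicalSpace α] (E : TwoComplexOn α) : Prop :=
  E.SatC 6 ∧ Nonempty (↥E.support ≃ₜ (ℝ × ℝ)) ∧
    ∀ F ∈ E.cell2, (E.neighbors F).ncard = 6

/-- A flat in a `C(6)` complex `X`: a flat plane contained in `X` as a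
subcomplex whose gallery distances agree with those of `X`. -/
def IsFlatC6 {α : Type*} [TopologicalSpace α] (X E : TwoComplexOn α) : Prop :=
  E.Subcomplex X ∧ IsFlatPlaneC6 E ∧
    ∀ F ∈ E.cell2, ∀ F' ∈ E.cell2, E.galleryDist F F' = X.galleryDist F F'

/-! ## Abstract simplicial complexes, largeness, systolicity -/

/-- An abstract simplicial complex on a vertex type `V`. -/
structure SimpComplex (V : Type*) where
  faces : Set (Finset V)
  down_closed : ∀ ⦃s t : Finset V⦄, s ∈ faces → t ⊆ s → t.Nonempty → t ∈ faces

namespace SimpComplex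

variable {V : Type*}

def vertices (X : SimpComplex V) : Set V := {v | {v} ∈ X.faces}

/-- Two vertices are adjacent if they span an edge. -/
def Adj (X : SimpComplex V) (u v : V) : Prop := u ≠ v ∧ ({u, v} : Finset V) ∈ X.faces

/-- A flag complex: every finite set of pairwise adjacent vertices spans a simplex. -/
def Flag (X : SimpComplex V) : Prop :=
  ∀ s : Finset V, s.Nonempty → (∀ v ∈ s, v ∈ X.vertices) →
    (∀ u ∈ s, ∀ v ∈ s, u ≠ v → ({u, v} : Finset V) ∈ X.faces) → s ∈ X.faces

/-- An (embedded) cycle of length `m` in the 1-skeleton. -/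
def IsCycle (X : SimpComplex V) (m : ℕ) (c : ZMod m → V) : Prop :=
  3 ≤ m ∧ Function.Injective c ∧ ∀ i, X.Adj (c i) (c (i + 1))

/-- The cycle `c` has a diagonal: an edge joining two nonconsecutive vertices. -/
def HasDiagonal (X : SimpComplex V) (m : ℕ) (c : ZMod m → V) : Prop :=
  ∃ i j : ZMod m, j ≠ i - 1 ∧ j ≠ i ∧ j ≠ i + 1 ∧ X.Adj (c i) (c j)

/-- `k`-largeness: flag, and every cycle of length less than `k` has a diagonal.
(Cycles of length `3` are excluded: they have no pair of nonconsecutive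
vertices, and their triangles are provided by flagness.) -/
def IsLarge (X : SimpComplex V) (k : ℕ) : Prop :=
  X.Flag ∧ ∀ m : ℕ, 4 ≤ m → m < k →
    ∀ c : ZMod m → V, X.IsCycle m c → X.HasDiagonal m c

/-- The link of a vertex. -/
def link (X : SimpComplex V) (v : V) : SimpComplex V where
  faces := {s | v ∉ s ∧ insert v s ∈ X.faces}
  down_closed := by
    intro s t hs hts ht
    refine ⟨fun hv => hs.1 (hts hv), X.down_closed hs.2 ?_ ⟨v, Finset.mem_insert_self v t⟩⟩
    exact Finset.insert_subset_insert v hts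

/-- An edge path in the 1-skeleton. -/
def IsEdgePath (X : SimpComplex V) (l : List V) : Prop :=
  (∀ v ∈ l, ({v} : Finset V) ∈ X.faces) ∧ l.Chain' X.Adj

/-- Elementary (combinatorial) homotopy of edge paths: removing backtracks and
pushing across triangles.  For simplicial complexes this generates the same
equivalence as topological homotopy of paths in the geometric realization. -/
inductive Homotopic (X : SimpComplex V) : List V → List V → Prop
  | refl (l : List V) : Homotopic X l l
  | symm {l₁ l₂ : List V} : Homotopic X l₁ l₂ → Homotopic X l₂ l₁
  | trans {l₁ l₂ l₃ : List V} : Homotopic X l₁ l₂ → Homotopic X l₂ l₃ → Homotopic X l₁ l₃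
  | backtrack (l₁ l₂ : List V) (u v : V) :
      Homotopic X (l₁ ++ u :: v :: u :: l₂) (l₁ ++ u :: l₂)
  | triangle (l₁ l₂ : List V) (u v w : V) (h : ({u, v, w} : Finset V) ∈ X.faces) :
      Homotopic X (l₁ ++ u :: v :: w :: l₂) (l₁ ++ u :: w :: l₂)

/-- Combinatorial simple connectivity: connected, and every edge loop
contracts to a point. -/
def SimplyConnected (X : SimpComplex V) : Prop :=
  (∀ u ∈ X.vertices, ∀ v ∈ X.vertices, ∃ l : List V,
      X.IsEdgePath l ∧ l.head? = some u ∧ l.getLast? = some v) ∧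
  (∀ (u : V) (l : List V), X.IsEdgePath l → l.head? = some u → l.getLast? = some u →
      X.Homotopic l [u])

/-- A systolic complex: simply connected with `6`-large vertex links. -/
def Systolic (X : SimpComplex V) : Prop :=
  X.SimplyConnected ∧ ∀ v ∈ X.vertices, (X.link v).IsLarge 6

/-- The graph metric on the 1-skeleton (number of edges of a shortest edge
path). -/
noncomputable def dist (X : SimpComplex V) (u v : V) : ℕ :=
  sInf {n | ∃ l : List V, X.IsEdgePath l ∧ l.length = n + 1 ∧
    l.head? = some u ∧ l.getLast? = some v}

end SimpComplex

/-- The 1-skeleton of the standard equilateral triangulation `E²_△` of the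
plane, as a graph on `ℤ × ℤ` (the triangular lattice). -/
def triLattice : SimpleGraph (ℤ × ℤ) where
  Adj p q := (q.1 - p.1) ^ 2 + (q.1 - p.1) * (q.2 - p.2) + (q.2 - p.2) ^ 2 = 1
  symm := by
    constructor
    intro p q h
    have : (p.1 - q.1) ^ 2 + (p.1 - q.1) * (p.2 - q.2) + (p.2 - q.2) ^ 2
        = (q.1 - p.1) ^ 2 + (q.1 - p.1) * (q.2 - p.2) + (q.2 - p.2) ^ 2 := by ring
    rw [this]; exact h
  loopless := by constructor; intro p h; simp at h

/-- The 1-skeleton of the standard square tiling `E²_□` of the plane, as a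
graph on `ℤ × ℤ` (the square lattice). -/
def squareLattice : SimpleGraph (ℤ × ℤ) where
  Adj p q := (q.1 - p.1) ^ 2 + (q.2 - p.2) ^ 2 = 1
  symm := by
    constructor
    intro p q h
    have : (p.1 - q.1) ^ 2 + (p.2 - q.2) ^ 2 = (q.1 - p.1) ^ 2 + (q.2 - p.2) ^ 2 := by ring
    rw [this]; exact h
  loopless := by constructor; intro p h; simp at h

/-- A flat in a systolic complex: an isometric embedding of the 1-skeleton of
`E²_△` (with its graph metric) into the 1-skeleton of `X` (with its graph
metric). -/
def IsSystolicFlat {V : Type*} (X : SimpComplex V) (f : ℤ × ℤ → V) : Prop :=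
  (∀ z, f z ∈ X.vertices) ∧ Function.Injective f ∧
    ∀ z w : ℤ × ℤ, X.dist (f z) (f w) = triLattice.dist z w

/-- The nerve of the cover of a 2-complex by its closed 2-cells. -/
def nerve {α : Type*} [TopologicalSpace α] (X : TwoComplexOn α) : SimpComplex (Set α) where
  faces := {s | s.Nonempty ∧ (∀ F ∈ s, F ∈ X.cell2) ∧ (⋂ F ∈ s, (F : Set α)).Nonempty}
  down_closed := by
    intro s t hs hts ht
    refine ⟨ht, fun F hF => hs.2.1 F (hts hF), hs.2.2.mono ?_⟩
    intro x hx
    exact Set.mem_iInter₂.2 fun F hF => Set.mem_iInter₂.1 hx F (hts hF)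

/-- The subcomplex of `X` spanned by a family `𝓔` of closed 2-cells. -/
def subcomplexGen {α : Type*} [TopologicalSpace α] (X : TwoComplexOn α)
    (𝓔 : Set (Set α)) : TwoComplexOn α where
  cell0 := {v ∈ X.cell0 | ∃ F ∈ 𝓔, v ∈ F}
  cell1 := {e ∈ X.cell1 | ∃ F ∈ 𝓔, e ⊆ F}
  cell2 := 𝓔 ∩ X.cell2
/-! ## Square complexes and quadric complexes -/

/-- A combinatorial square complex: a simple graph together with a set of
squares, each recorded as a closed combinatorial path of length 4. -/
structure SquareComplex (V : Type*) where
  graph : SimpleGraph V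
  squares : Set (ZMod 4 → V)

/-- The set of (unordered) boundary edges of a square. -/
def sqEdges {V : Type*} (c : ZMod 4 → V) : Set (Sym2 V) :=
  {e | ∃ i : ZMod 4, e = s(c i, c (i + 1))}

/-- An embedded cycle of length `m` in a graph. -/
def IsGraphCycle {V : Type*} (G : SimpleGraph V) (m : ℕ) (c : ZMod m → V) : Prop :=
  3 ≤ m ∧ Function.Injective c ∧ ∀ i, G.Adj (c i) (c (i + 1))

/-- The set of (unordered) edges of a cycle. -/
def cycEdges {V : Type*} {m : ℕ} (c : ZMod m → V) : Set (Sym2 V) :=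
  {e | ∃ i : ZMod m, e = s(c i, c (i + 1))}

namespace SquareComplex

variable {V : Type*}

/-- (A): the attaching map of every square is an immersion (a closed edge path
with no backtracking). -/
def CondA (Y : SquareComplex V) : Prop :=
  ∀ c ∈ Y.squares, (∀ i : ZMod 4, Y.graph.Adj (c i) (c (i + 1))) ∧
    ∀ i : ZMod 4, c (i - 1) ≠ c (i + 1)

/-- (B): two squares sharing at least three edges have equal boundaries. -/
def CondB (Y : SquareComplex V) : Prop :=
  ∀ c₁ ∈ Y.squares, ∀ c₂ ∈ Y.squares,
    3 ≤ (sqEdges c₁ ∩ sqEdges c₂).ncard → sqEdges c₁ = sqEdges c₂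

/-- (C): if the boundary of the union of two squares is a cycle of length 4,
then that cycle bounds a square. -/
def CondC (Y : SquareComplex V) : Prop :=
  ∀ c₁ ∈ Y.squares, ∀ c₂ ∈ Y.squares, ∀ b : ZMod 4 → V,
    IsGraphCycle Y.graph 4 b →
    cycEdges b = (sqEdges c₁ ∪ sqEdges c₂) \ (sqEdges c₁ ∩ sqEdges c₂) →
    ∃ c ∈ Y.squares, sqEdges c = cycEdges b

/-- (D): if the boundary of the union of three squares is a cycle of length 6,
then that cycle is the boundary of the union of two squares. -/
def CondD (Y : SquareComplex V) : Prop :=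
  ∀ c₁ ∈ Y.squares, ∀ c₂ ∈ Y.squares, ∀ c₃ ∈ Y.squares, ∀ b : ZMod 6 → V,
    IsGraphCycle Y.graph 6 b →
    cycEdges b = (sqEdges c₁ ∪ sqEdges c₂ ∪ sqEdges c₃) \
      ((sqEdges c₁ ∩ sqEdges c₂) ∪ (sqEdges c₁ ∩ sqEdges c₃) ∪ (sqEdges c₂ ∩ sqEdges c₃)) →
    ∃ c ∈ Y.squares, ∃ c' ∈ Y.squares,
      cycEdges b = (sqEdges c ∪ sqEdges c') \ (sqEdges c ∩ sqEdges c')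

/-- Elementary homotopy of edge paths in a square complex: removing backtracks
and pushing across squares. -/
inductive SqHomotopic (Y : SquareComplex V) : List V → List V → Prop
  | refl (l : List V) : SqHomotopic Y l l
  | symm {l₁ l₂ : List V} : SqHomotopic Y l₁ l₂ → SqHomotopic Y l₂ l₁
  | trans {l₁ l₂ l₃ : List V} :
      SqHomotopic Y l₁ l₂ → SqHomotopic Y l₂ l₃ → SqHomotopic Y l₁ l₃
  | backtrack (l₁ l₂ : List V) (u v : V) :
      SqHomotopic Y (l₁ ++ u :: v :: u :: l₂) (l₁ ++ u :: l₂)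
  | square (l₁ l₂ : List V) (c : ZMod 4 → V) (hc : c ∈ Y.squares) (i : ZMod 4) :
      SqHomotopic Y (l₁ ++ c i :: c (i + 1) :: l₂)
        (l₁ ++ c i :: c (i - 1) :: c (i + 2) :: c (i + 1) :: l₂)

/-- Combinatorial simple connectivity of a square complex. -/
def SimplyConnected (Y : SquareComplex V) : Prop :=
  Y.graph.Connected ∧ ∀ (u : V) (l : List V), l.Chain' Y.graph.Adj →
    l.head? = some u → l.getLast? = some u → SqHomotopic Y l [u]

/-- A locally quadric complex. -/
def LocallyQuadric (Y : SquareComplex V) : Prop :=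
  Y.CondA ∧ Y.CondB ∧ Y.CondC ∧ Y.CondD

/-- A quadric complex: a simply connected locally quadric complex. -/
def IsQuadric (Y : SquareComplex V) : Prop :=
  Y.SimplyConnected ∧ Y.LocallyQuadric

end SquareComplex

/-- A flat in a quadric complex: an isometric embedding of the 1-skeleton of
the standard square tiling `E²_□` (with its graph metric) into the 1-skeleton
of `Y` (with its graph metric). -/
def IsQuadricFlat {V : Type*} (Y : SquareComplex V) (f : ℤ × ℤ → V) : Prop :=
  Function.Injective f ∧ ∀ z w : ℤ × ℤ, Y.graph.dist (f z) (f w) = squareLattice.dist z w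

/-- The 1-skeleton of the quadrization of a 2-complex `X`: the bipartite graph
on `X₀ ⊔ X₂` joining a 0-cell `v` to a 2-cell `F` whenever `v ∈ ∂F`. -/
def quadGraph {α : Type*} [TopologicalSpace α] (X : TwoComplexOn α) :
    SimpleGraph (α ⊕ Set α) where
  Adj a b :=
    (∃ v F, a = Sum.inl v ∧ b = Sum.inr F ∧ v ∈ X.cell0 ∧ F ∈ X.cell2 ∧ v ∈ frontier F) ∨
    (∃ v F, b = Sum.inl v ∧ a = Sum.inr F ∧ v ∈ X.cell0 ∧ F ∈ X.cell2 ∧ v ∈ frontier F)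
  symm := by
    constructor
    intro a b h
    rcases h with h | h
    · exact Or.inr h
    · exact Or.inl h
  loopless := by
    constructor
    rintro a (⟨v, F, rfl, h, -⟩ | ⟨v, F, h', h, -⟩)
    · exact absurd h (by simp)
    · rw [h'] at h; exact absurd h (by simp)

/-- The quadrization of a 2-complex: the above bipartite graph with a square
filling each embedded 4-cycle. -/
def quadrization {α : Type*} [TopologicalSpace α] (X : TwoComplexOn α) :
    SquareComplex (α ⊕ Set α) where
  graph := quadGraph X
  squares := {c | IsGraphCycle (quadGraph X) 4 c}

/-! ## Arcs, discs, geodesics, CAT(0) -/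

/-- `s` is an arc from `a` to `b`: a homeomorphic image of `[0,1]`. -/
def IsArc {β : Type*} [TopologicalSpace β] (s : Set β) (a b : β) : Prop :=
  ∃ h : (Set.Icc (0 : ℝ) 1) → β, Topology.IsEmbedding h ∧ Set.range h = s ∧
    h ⟨0, by norm_num⟩ = a ∧ h ⟨1, by norm_num⟩ = b

/-- `F` is a closed disc with boundary circle `B`. -/
def IsClosedDiscWithBoundary {β : Type*} [TopologicalSpace β] (F B : Set β) : Prop :=
  ∃ h : (Metric.closedBall (0 : EPlane) 1) → β, Topology.IsEmbedding h ∧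
    Set.range h = F ∧ h '' {x | ‖(x : EPlane)‖ = 1} = B

/-- A geodesic from `x` to `y`, parametrized by arc length on `[0, dist x y]`. -/
def IsGeodesic {β : Type*} [MetricSpace β] (γ : ℝ → β) (x y : β) : Prop :=
  γ 0 = x ∧ γ (dist x y) = y ∧
    ∀ s ∈ Set.Icc (0 : ℝ) (dist x y), ∀ t ∈ Set.Icc (0 : ℝ) (dist x y),
      dist (γ s) (γ t) = |s - t|

/-- A geodesic metric space. -/
def GeodesicSpace (β : Type*) [MetricSpace β] : Prop :=
  ∀ x y : β, ∃ γ : ℝ → β, IsGeodesic γ x y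

/-- CAT(0): a geodesic space in which geodesic triangles are at least as thin
as their Euclidean comparison triangles; for geodesic spaces this is
equivalent to the CN-inequality of Bruhat–Tits, used here. -/
def IsCAT0 (β : Type*) [MetricSpace β] : Prop :=
  GeodesicSpace β ∧ ∀ x y z m : β,
    dist y m = dist y z / 2 → dist z m = dist y z / 2 →
    dist x m ^ 2 ≤ dist x y ^ 2 / 2 + dist x z ^ 2 / 2 - dist y z ^ 2 / 4
/-! ## Flat planes and quasi-flats in `C(4)-T(4)` complexes -/

/-- A flat plane in the `C(4)-T(4)` sense: a `C(4)-T(4)` complex homeomorphic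
to the Euclidean plane in which every closed 2-cell intersects exactly eight
neighbouring closed 2-cells — four along a single piece and four in a single
vertex — and every 0-cell of valence at least 3 has valence exactly 4. -/
def IsFlatPlane44 {α : Type*} [TopologicalSpace α] (E : TwoComplexOn α) : Prop :=
  E.SatC 4 ∧ E.SatT 4 ∧ Nonempty (↥E.support ≃ₜ (ℝ × ℝ)) ∧
  (∀ F ∈ E.cell2, ∃ Np Nv : Finset (Set α),
    (↑(Np ∪ Nv) : Set (Set α)) = E.neighbors F ∧ Disjoint Np Nv ∧
    Np.card = 4 ∧ Nv.card = 4 ∧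
    (∀ F' ∈ Np, E.IsPiece (F ∩ F')) ∧
    (∀ F' ∈ Nv, ∃ v ∈ E.cell0, F ∩ F' = {v})) ∧
  (∀ v ∈ E.cell0, 3 ≤ E.valence v → E.valence v = 4)

/-- The combinatorial structure of the model complex `𝔛` of Definition 7.4:
`𝔛` is obtained from `𝔛'` — whose 1-skeleton consists of the lines
`ℝ×ℤ×{0}`, `ℤ×ℝ×{1}` and the segments `ℤ×ℤ×[0,1]`, with an octagonal 2-cell
filling each 8-cycle — by collapsing the vertical edges indexed by `A`.
A complex `E` carrying this structure, with underlying space a plane, is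
(cellularly) homeomorphic to `𝔛`. -/
structure QuasiFlatPlaneStruct {β : Type*} [TopologicalSpace β] (E : TwoComplexOn β) where
  /-- the set of collapsed vertical edges -/
  A : Set (ℤ × ℤ)
  /-- bottom vertices `(i,j,0)` -/
  v0 : ℤ × ℤ → β
  /-- top vertices `(i,j,1)` -/
  v1 : ℤ × ℤ → β
  /-- bottom horizontal edges `[i,i+1] × {j} × {0}` -/
  eb : ℤ × ℤ → Set β
  /-- top edges `{i} × [j,j+1] × {1}` -/
  et : ℤ × ℤ → Set β
  /-- vertical edges `{i} × {j} × [0,1]` (possibly collapsed) -/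
  ev : ℤ × ℤ → Set β
  /-- octagonal 2-cells -/
  face : ℤ × ℤ → Set β
  v1_eq : ∀ z ∈ A, v1 z = v0 z
  v0_inj : Function.Injective v0
  face_inj : Function.Injective face
  cell0_eq : E.cell0 = Set.range v0 ∪ Set.range v1
  cell1_eq : E.cell1 = Set.range eb ∪ Set.range et ∪ ev '' Aᶜ
  cell2_eq : E.cell2 = Set.range face
  eb_arc : ∀ i j : ℤ, IsArc (eb (i, j)) (v0 (i, j)) (v0 (i + 1, j))
  et_arc : ∀ i j : ℤ, IsArc (et (i, j)) (v1 (i, j)) (v1 (i, j + 1))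
  ev_arc : ∀ z ∉ A, IsArc (ev z) (v0 z) (v1 z)
  ev_collapsed : ∀ z ∈ A, ev z = {v0 z}
  face_disc : ∀ i j : ℤ, IsClosedDiscWithBoundary (face (i, j))
    (eb (i, j) ∪ et (i + 1, j) ∪ eb (i, j + 1) ∪ et (i, j) ∪
      ev (i, j) ∪ ev (i + 1, j) ∪ ev (i, j + 1) ∪ ev (i + 1, j + 1))
  covers : E.support = ⋃ z : ℤ × ℤ, face z
  plane : Nonempty (↥(⋃ z : ℤ × ℤ, face z) ≃ₜ (ℝ × ℝ))

/-- A quasi-flat plane: a `C(4)-T(4)` complex homeomorphic to the complex `𝔛`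
of Definition 7.4. -/
def IsQuasiFlatPlane {β : Type*} [TopologicalSpace β] (E : TwoComplexOn β) : Prop :=
  E.SatC 4 ∧ E.SatT 4 ∧ Nonempty (QuasiFlatPlaneStruct E)

/-- A quasi-flat in a `C(4)-T(4)` complex `X`: a quasi-flat plane contained in
`X` as a subcomplex whose gallery distances agree with those of `X`. -/
def IsQuasiFlat {α : Type*} [TopologicalSpace α] (X E : TwoComplexOn α) : Prop :=
  E.Subcomplex X ∧ IsQuasiFlatPlane E ∧
    ∀ F ∈ E.cell2, ∀ F' ∈ E.cell2, E.galleryDist F F' = X.galleryDist F F'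

/-! ## Miscellaneous geometry -/

/-- The vertices of a regular `m`-gon inscribed in the unit circle of `ℝ²`. -/
noncomputable def polyVertex (m : ℕ) (i : ZMod m) : ℝ × ℝ :=
  (Real.cos (2 * Real.pi * i.val / m), Real.sin (2 * Real.pi * i.val / m))

/-- A bundled combinatorial 2-complex. -/
structure TwoComplex : Type 1 where
  α : Type
  top : TopologicalSpace α
  complex : @TwoComplexOn α top

attribute [instance] TwoComplex.top

/-!
Split the polygon along a diagonal whose endpoints are sent to equal or adjacent vertices of `X`.
Such a diagonal exists as long as the polygon has `4 ≤ n < k` sides: a closed edge path of length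
`n` either repeats a vertex, or it is an embedded cycle and `k`-largeness provides a diagonal. Both
halves are smaller polygons of the same kind, and the induction ends at triangles, which span
simplices because `X` is flag. Geometrically, for a polygon inscribed in the unit circle the chord
through the two endpoints is the only common part of the two halves, which lie in opposite closed
half-planes; hence the convex hull is the union of the convex hulls of the halves, and their
triangulations glue with disjoint interiors.
-/

open Real

section HalfSpaces

variable {E : Type*} [AddCommGroup E] [Module ℝ E]

theorem exists_mem_segment_eq_of_lt (ℓ : E →ₗ[ℝ] ℝ) {c : ℝ} {a b x : E} (ha : c ≤ ℓ a)
    (hb : ℓ b ≤ c) (hx : x ∈ segment ℝ a b) (hcx : c < ℓ x) :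
    ∃ z ∈ segment ℝ a b, ℓ z = c ∧ x ∈ segment ℝ a z := by
  obtain ⟨s, t, hs, ht, hst, rfl⟩ := hx
  have hℓx : ℓ (s • a + t • b) = s * ℓ a + t * ℓ b := by simp
  obtain rfl : s = 1 - t := by linarith
  rw [hℓx] at hcx
  have hδ : 0 < ℓ a - ℓ b := by nlinarith
  -- `z` is the point of `[a, b]` at parameter `r` where `ℓ` crosses the level `c`
  set r := (ℓ a - c) / (ℓ a - ℓ b)
  have htr : t < r := by rw [lt_div_iff₀ hδ]; nlinarith
  have hrδ : r * (ℓ a - ℓ b) = ℓ a - c := div_mul_cancel₀ _ hδ.ne'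
  have hr0 : 0 < r := by linarith
  have hr1 : r ≤ 1 := by rw [div_le_one hδ]; linarith
  refine ⟨(1 - r) • a + r • b, ⟨1 - r, r, by linarith, hr0.le, by ring, rfl⟩, ?_,
    ⟨1 - t / r, t / r, ?_, by positivity, by ring, ?_⟩⟩
  · simp only [map_add, map_smul, smul_eq_mul]
    linear_combination -hrδ
  · rw [sub_nonneg, div_le_one hr0]; exact htr.le
  · match_scalars <;> field_simp; ring

theorem mem_convexHull_left_of_le (ℓ : E →ₗ[ℝ] ℝ) {c : ℝ} {A B : Set E}
    (hA : ∀ a ∈ A, c ≤ ℓ a) (hB : ∀ b ∈ B, ℓ b ≤ c)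
    (hline : ∀ x ∈ convexHull ℝ (A ∪ B), ℓ x = c → x ∈ convexHull ℝ A) {x : E}
    (hx : x ∈ convexHull ℝ (A ∪ B)) (hcx : c ≤ ℓ x) : x ∈ convexHull ℝ A := by
  rcases hcx.eq_or_lt with hcx | hcx
  · exact hline x hx hcx.symm
  have hB' : convexHull ℝ B ⊆ {y | ℓ y ≤ c} := convexHull_min hB (convex_halfSpace_le ℓ.isLinear c)
  rcases B.eq_empty_or_nonempty with rfl | hBne
  · simpa using hx
  rcases A.eq_empty_or_nonempty with rfl | hAne
  · rw [empty_union] at hx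
    exact absurd (hB' hx) hcx.not_ge
  rw [convexHull_union hAne hBne, mem_convexJoin] at hx
  obtain ⟨a, ha, b, hb, hxab⟩ := hx
  obtain ⟨z, hz, hℓz, hxz⟩ := exists_mem_segment_eq_of_lt ℓ
    (convexHull_min hA (convex_halfSpace_ge ℓ.isLinear c) ha) (hB' hb) hxab hcx
  have hzAB : z ∈ convexHull ℝ (A ∪ B) := (convex_convexHull ℝ _).segment_subset
    (convexHull_mono subset_union_left ha) (convexHull_mono subset_union_right hb) hz
  exact (convex_convexHull ℝ A).segment_subset ha (hline z hzAB hℓz) hxz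

theorem convexHull_union_eq_of_halfSpaces (ℓ : E →ₗ[ℝ] ℝ) {c : ℝ} {A B : Set E}
    (hA : ∀ a ∈ A, c ≤ ℓ a) (hB : ∀ b ∈ B, ℓ b ≤ c)
    (hline : ∀ x ∈ convexHull ℝ (A ∪ B), ℓ x = c → x ∈ convexHull ℝ A ∩ convexHull ℝ B) :
    convexHull ℝ (A ∪ B) = convexHull ℝ A ∪ convexHull ℝ B := by
  refine subset_antisymm (fun x hx => ?_)
    (union_subset (convexHull_mono subset_union_left) (convexHull_mono subset_union_right))
  rcases le_total c (ℓ x) with hcx | hcx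
  · exact .inl (mem_convexHull_left_of_le ℓ hA hB (fun y hy h => (hline y hy h).1) hx hcx)
  · refine .inr (mem_convexHull_left_of_le (-ℓ) (c := -c) (A := B) (B := A) ?_ ?_ ?_
      (union_comm A B ▸ hx) (by simpa using hcx))
    · simpa using hB
    · simpa using hA
    · intro y hy h
      exact (hline y (union_comm A B ▸ hy) (by simpa using h)).2

variable [TopologicalSpace E] [ContinuousAdd E] [ContinuousSMul ℝ E]

theorem interior_subset_setOf_lt (ℓ : StrongDual ℝ E) (hℓ : ℓ ≠ 0) {c : ℝ} {s : Set E}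
    (hs : s ⊆ {x | c ≤ ℓ x}) : interior s ⊆ {x | c < ℓ x} := by
  intro x hx
  have : ℓ '' interior s ⊆ interior (Ici c) :=
    interior_maximal (image_subset_iff.2 (interior_subset.trans hs))
      (ℓ.isOpenMap_of_ne_zero hℓ _ isOpen_interior)
  rw [interior_Ici] at this
  exact this ⟨x, hx, rfl⟩

theorem disjoint_interior_of_halfSpaces (ℓ : StrongDual ℝ E) (hℓ : ℓ ≠ 0) {c : ℝ} {s t : Set E}
    (hs : s ⊆ {x | c ≤ ℓ x}) (ht : t ⊆ {x | ℓ x ≤ c}) : Disjoint (interior s) (interior t) := by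
  refine Set.disjoint_left.2 fun x hxs hxt => ?_
  have h₁ : c < ℓ x := interior_subset_setOf_lt ℓ hℓ hs hxs
  have h₂ : -c < (-ℓ) x :=
    interior_subset_setOf_lt (-ℓ) (neg_ne_zero.2 hℓ) (fun y hy => by simpa using ht hy) hxt
  simp only [neg_apply] at h₂
  linarith

end HalfSpaces

section Triangulation

variable {ι E : Type*} [AddCommGroup E] [Module ℝ E] [TopologicalSpace E]

def IsTriangulation (P : ι → E) (S : Finset ι) (T : Finset (Finset ι)) : Prop :=
  (∀ t ∈ T, t.card = 3 ∧ t ⊆ S) ∧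
    ⋃ t ∈ T, convexHull ℝ (P '' t) = convexHull ℝ (P '' S) ∧
    (T : Set (Finset ι)).Pairwise fun t₁ t₂ ↦
      Disjoint (interior (convexHull ℝ (P '' t₁))) (interior (convexHull ℝ (P '' t₂)))

theorem isTriangulation_singleton (P : ι → E) {S : Finset ι} (hS : S.card = 3) :
    IsTriangulation P S {S} :=
  ⟨by simpa using hS, by simp, by simp⟩

theorem IsTriangulation.union [DecidableEq ι] [ContinuousAdd E] [ContinuousSMul ℝ E] {P : ι → E}
    {S₁ S₂ : Finset ι} {T₁ T₂ : Finset (Finset ι)} (h₁ : IsTriangulation P S₁ T₁)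
    (h₂ : IsTriangulation P S₂ T₂) (ℓ : StrongDual ℝ E) (hℓ : ℓ ≠ 0) {c : ℝ}
    (hS₁ : ∀ i ∈ S₁, c ≤ ℓ (P i)) (hS₂ : ∀ i ∈ S₂, ℓ (P i) ≤ c)
    (hline : ∀ x ∈ convexHull ℝ (P '' ↑(S₁ ∪ S₂)), ℓ x = c →
      x ∈ convexHull ℝ (P '' S₁) ∩ convexHull ℝ (P '' S₂)) :
    IsTriangulation P (S₁ ∪ S₂) (T₁ ∪ T₂) := by
  obtain ⟨hT₁, hcover₁, hdisj₁⟩ := h₁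
  obtain ⟨hT₂, hcover₂, hdisj₂⟩ := h₂
  have hhull₁ : ∀ t ∈ T₁, convexHull ℝ (P '' t) ⊆ {x | c ≤ ℓ x} := fun t ht =>
    convexHull_min (by rintro _ ⟨i, hi, rfl⟩; exact hS₁ i ((hT₁ t ht).2 hi))
      (convex_halfSpace_ge ℓ.isLinear c)
  have hhull₂ : ∀ t ∈ T₂, convexHull ℝ (P '' t) ⊆ {x | ℓ x ≤ c} := fun t ht =>
    convexHull_min (by rintro _ ⟨i, hi, rfl⟩; exact hS₂ i ((hT₂ t ht).2 hi))
      (convex_halfSpace_le ℓ.isLinear c)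
  refine ⟨?_, ?_, ?_⟩
  · intro t ht
    rcases Finset.mem_union.1 ht with ht | ht
    · exact ⟨(hT₁ t ht).1, (hT₁ t ht).2.trans Finset.subset_union_left⟩
    · exact ⟨(hT₂ t ht).1, (hT₂ t ht).2.trans Finset.subset_union_right⟩
  · rw [Finset.set_biUnion_union, hcover₁, hcover₂, Finset.coe_union, image_union,
      convexHull_union_eq_of_halfSpaces ℓ.toLinearMap (by simpa using hS₁) (by simpa using hS₂)
        (by simpa [image_union] using hline)]
  · rw [Finset.coe_union, pairwise_union]
    refine ⟨hdisj₁, hdisj₂, fun t₁ ht₁ t₂ ht₂ _ => ?_⟩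
    have h := disjoint_interior_of_halfSpaces ℓ hℓ (hhull₁ t₁ ht₁) (hhull₂ t₂ ht₂)
    exact ⟨h, h.symm⟩

end Triangulation

section UnitCircle

def unitVec (θ : ℝ) : ℝ × ℝ := (cos θ, sin θ)

def dirProj (γ : ℝ) : StrongDual ℝ (ℝ × ℝ) :=
  cos γ • ContinuousLinearMap.fst ℝ ℝ ℝ + sin γ • ContinuousLinearMap.snd ℝ ℝ ℝ

theorem dirProj_apply (γ : ℝ) (x : ℝ × ℝ) : dirProj γ x = cos γ * x.1 + sin γ * x.2 := by
  simp [dirProj]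

theorem dirProj_unitVec (γ θ : ℝ) : dirProj γ (unitVec θ) = cos (θ - γ) := by
  rw [dirProj_apply, unitVec, cos_sub]
  ring

theorem dirProj_ne_zero (γ : ℝ) : dirProj γ ≠ 0 := fun h => by
  simpa [dirProj_unitVec] using congrArg (· (unitVec γ)) h

def unitDisc : Set (ℝ × ℝ) := {x | x.1 ^ 2 + x.2 ^ 2 ≤ 1}

theorem convex_unitDisc : Convex ℝ unitDisc := by
  have h₁ := (even_two.convexOn_pow (𝕜 := ℝ)).comp_linearMap (LinearMap.fst ℝ ℝ ℝ)
  have h₂ := (even_two.convexOn_pow (𝕜 := ℝ)).comp_linearMap (LinearMap.snd ℝ ℝ ℝ)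
  rw [preimage_univ] at h₁ h₂
  simpa [unitDisc] using (h₁.add h₂).convex_le 1

theorem unitVec_mem_unitDisc (θ : ℝ) : unitVec θ ∈ unitDisc := by
  simp [unitDisc, unitVec]

theorem mem_segment_of_dirProj_eq_cos {γ d : ℝ} (hd₀ : 0 < d) (hdπ : d < π) {x : ℝ × ℝ}
    (hx : x ∈ unitDisc) (hℓ : dirProj γ x = cos d) :
    x ∈ segment ℝ (unitVec (γ - d)) (unitVec (γ + d)) := by
  rw [dirProj_apply] at hℓ
  have hx' : x.1 ^ 2 + x.2 ^ 2 ≤ 1 := hx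
  have hsin : 0 < sin d := sin_pos_of_pos_of_lt_pi hd₀ hdπ
  -- `(cos d, b)` are the coordinates of `x` in the frame rotated by `γ`
  set b := -sin γ * x.1 + cos γ * x.2
  have hb : b ^ 2 ≤ sin d ^ 2 := by
    have : cos d ^ 2 + b ^ 2 = x.1 ^ 2 + x.2 ^ 2 := by
      rw [← hℓ]; linear_combination (x.1 ^ 2 + x.2 ^ 2) * sin_sq_add_cos_sq γ
    nlinarith [sin_sq_add_cos_sq d]
  obtain ⟨hb₁, hb₂⟩ := abs_le_of_sq_le_sq' hb hsin.le
  refine ⟨(sin d - b) / (2 * sin d), (sin d + b) / (2 * sin d), ?_, ?_, by field_simp; ring, ?_⟩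
  · exact div_nonneg (by linarith) (by positivity)
  · exact div_nonneg (by linarith) (by positivity)
  · have h₁ : x.1 = cos γ * cos d - sin γ * b := by
      rw [← hℓ]; linear_combination -x.1 * sin_sq_add_cos_sq γ
    have h₂ : x.2 = sin γ * cos d + cos γ * b := by
      rw [← hℓ]; linear_combination -x.2 * sin_sq_add_cos_sq γ
    ext
    · simp only [unitVec, Prod.fst_add, Prod.smul_fst, smul_eq_mul, cos_sub, cos_add, h₁]
      field_simp
      ring
    · simp only [unitVec, Prod.snd_add, Prod.smul_snd, smul_eq_mul, sin_sub, sin_add, h₂]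
      field_simp
      ring

theorem cos_le_cos_of_le_of_le_two_pi_sub {d t : ℝ} (hd₀ : 0 ≤ d) (h₁ : d ≤ t)
    (h₂ : t ≤ 2 * π - d) : cos t ≤ cos d := by
  rcases le_total t π with h | h
  · exact cos_le_cos_of_nonneg_of_le_pi hd₀ h h₁
  · rw [← cos_two_pi_sub]
    exact cos_le_cos_of_nonneg_of_le_pi hd₀ (by linarith) (by linarith)

end UnitCircle

section InscribedPolygon

variable {ι : Type*} [LinearOrder ι] {θ : ι → ℝ}

theorem IsTriangulation.of_split (hθ : StrictMono θ) (hθ₂π : ∀ i j, θ i < θ j + 2 * π)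
    {S : Finset ι} {p q : ι} (hp : p ∈ S) (hq : q ∈ S) (hpq : p < q) {T₁ T₂ : Finset (Finset ι)}
    (h₁ : IsTriangulation (unitVec ∘ θ) (S.filter fun i => p ≤ i ∧ i ≤ q) T₁)
    (h₂ : IsTriangulation (unitVec ∘ θ) (S.filter fun i => i ≤ p ∨ q ≤ i) T₂) :
    IsTriangulation (unitVec ∘ θ) S (T₁ ∪ T₂) := by
  have hS : (S.filter fun i => p ≤ i ∧ i ≤ q) ∪ S.filter (fun i => i ≤ p ∨ q ≤ i) = S := by
    rw [← Finset.filter_or, Finset.filter_true_of_mem fun i _ => ?_]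
    rcases le_total i p with h | h
    · exact .inr (.inl h)
    rcases le_total i q with h' | h'
    exacts [.inl ⟨h, h'⟩, .inr (.inr h')]
  have hθpq : θ p < θ q := hθ hpq
  -- the chord from `unitVec (θ p)` to `unitVec (θ q)` is the level set `dirProj γ = cos d`
  set γ := (θ p + θ q) / 2 with hγ
  set d := (θ q - θ p) / 2 with hd
  have hd₀ : 0 < d := by linarith
  have hdπ : d < π := by linarith [hθ₂π q p]
  rw [← hS]
  refine h₁.union h₂ (dirProj γ) (dirProj_ne_zero γ) (c := cos d) ?_ ?_ ?_
  · intro i hi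
    obtain ⟨-, hpi, hiq⟩ := Finset.mem_filter.1 hi
    have := hθ.monotone hpi
    have := hθ.monotone hiq
    rw [Function.comp_apply, dirProj_unitVec, ← cos_abs (θ i - γ)]
    exact cos_le_cos_of_nonneg_of_le_pi (abs_nonneg _) hdπ.le (abs_le.2 ⟨by linarith, by linarith⟩)
  · intro i hi
    rw [Function.comp_apply, dirProj_unitVec]
    rcases (Finset.mem_filter.1 hi).2 with hip | hqi
    · have := hθ.monotone hip
      rw [← cos_neg]
      exact cos_le_cos_of_le_of_le_two_pi_sub hd₀.le (by linarith) (by linarith [hθ₂π q i])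
    · have := hθ.monotone hqi
      exact cos_le_cos_of_le_of_le_two_pi_sub hd₀.le (by linarith) (by linarith [hθ₂π i p])
  · intro x hx hℓx
    have hdisc : x ∈ unitDisc :=
      convexHull_min (by rintro _ ⟨i, -, rfl⟩; exact unitVec_mem_unitDisc _) convex_unitDisc hx
    have hchord := mem_segment_of_dirProj_eq_cos hd₀ hdπ hdisc hℓx
    rw [show γ - d = θ p by ring, show γ + d = θ q by ring] at hchord
    have hsub : ∀ A : Finset ι, p ∈ A → q ∈ A → x ∈ convexHull ℝ ((unitVec ∘ θ) '' A) :=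
      fun A hpA hqA => (convex_convexHull ℝ _).segment_subset
        (subset_convexHull ℝ _ (mem_image_of_mem _ hpA))
        (subset_convexHull ℝ _ (mem_image_of_mem _ hqA)) hchord
    exact ⟨hsub _ (by simp [hp, hpq.le]) (by simp [hq, hpq.le]),
      hsub _ (by simp [hp]) (by simp [hq])⟩

end InscribedPolygon

theorem ZMod.val_add_one_eq_ite {n : ℕ} [NeZero n] (i : ZMod n) :
    (i + 1).val = if i.val + 1 = n then 0 else i.val + 1 := by
  have hi := i.val_lt
  rw [ZMod.val_add, ZMod.val_one_eq_one_mod]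
  obtain _ | _ | n := n
  · exact absurd rfl (NeZero.ne 0)
  · rw [if_pos (by omega)]
    exact Nat.mod_one _
  · rw [Nat.one_mod_eq_one.2 (by omega)]
    split_ifs with h
    · rw [h, Nat.mod_self]
    · exact Nat.mod_eq_of_lt (by omega)

namespace Finset

variable {ι : Type*} [LinearOrder ι]

/-- Successor in the cyclic order of `S`: the largest element is followed by the smallest. -/
def IsCyclicSucc (S : Finset ι) (a b : ι) : Prop :=
  a ∈ S ∧ b ∈ S ∧ ((a < b ∧ ∀ x ∈ S, x ≤ a ∨ b ≤ x) ∨ ∀ x ∈ S, b ≤ x ∧ x ≤ a)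

def IsDiagonal (S : Finset ι) (p q : ι) : Prop :=
  p ∈ S ∧ q ∈ S ∧ p < q ∧ (∃ x ∈ S, p < x ∧ x < q) ∧ ∃ y ∈ S, y < p ∨ q < y

variable {S : Finset ι} {a b p q : ι}

theorem IsCyclicSucc.of_filter_le_and_le (hp : p ∈ S) (hq : q ∈ S)
    (h : (S.filter fun i => p ≤ i ∧ i ≤ q).IsCyclicSucc a b) :
    S.IsCyclicSucc a b ∨ (a = q ∧ b = p) := by
  obtain ⟨ha, hb, h | h⟩ := h <;> simp only [mem_filter] at ha hb
  · refine .inl ⟨ha.1, hb.1, .inl ⟨h.1, fun x hx => ?_⟩⟩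
    by_cases hx' : p ≤ x ∧ x ≤ q
    · exact h.2 x (mem_filter.2 ⟨hx, hx'⟩)
    · push Not at hx'
      rcases le_or_gt p x with hpx | hxp
      · exact .inr (by have := hx' hpx; order)
      · exact .inl (by order)
  · have hp' := h p (mem_filter.2 ⟨hp, le_rfl, by order⟩)
    have hq' := h q (mem_filter.2 ⟨hq, by order, le_rfl⟩)
    exact .inr ⟨by order, by order⟩

theorem IsCyclicSucc.of_filter_le_or_le (hp : p ∈ S) (hq : q ∈ S) (hpq : p < q)
    (h : (S.filter fun i => i ≤ p ∨ q ≤ i).IsCyclicSucc a b) :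
    S.IsCyclicSucc a b ∨ (a = p ∧ b = q) := by
  obtain ⟨ha, hb, h | h⟩ := h <;> simp only [mem_filter] at ha hb
  · by_cases hab : a ≤ p ∧ q ≤ b
    · obtain ⟨hap, hqb⟩ := hab
      have hp' := h.2 p (mem_filter.2 ⟨hp, .inl le_rfl⟩)
      have hq' := h.2 q (mem_filter.2 ⟨hq, .inr le_rfl⟩)
      exact .inr ⟨by rcases hp' with h | h <;> order, by rcases hq' with h | h <;> order⟩
    refine .inl ⟨ha.1, hb.1, .inl ⟨h.1, fun x hx => ?_⟩⟩
    by_cases hx' : x ≤ p ∨ q ≤ x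
    · exact h.2 x (mem_filter.2 ⟨hx, hx'⟩)
    · push Not at hx' hab
      rcases ha.2 with ha' | ha'
      · rcases hb.2 with hb' | hb'
        · exact .inr (by order)
        · exact absurd hb' (hab ha').not_ge
      · exact .inl (by order)
  · refine .inl ⟨ha.1, hb.1, .inr fun x hx => ?_⟩
    by_cases hx' : x ≤ p ∨ q ≤ x
    · exact h x (mem_filter.2 ⟨hx, hx'⟩)
    · have hp' := h p (mem_filter.2 ⟨hp, .inl le_rfl⟩)
      have hq' := h q (mem_filter.2 ⟨hq, .inr le_rfl⟩)
      push Not at hx'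
      exact ⟨by order, by order⟩

theorem IsDiagonal.filter_le_and_le (h : S.IsDiagonal p q) :
    3 ≤ (S.filter fun i => p ≤ i ∧ i ≤ q).card ∧ S.filter (fun i => p ≤ i ∧ i ≤ q) ⊂ S := by
  obtain ⟨hp, hq, hpq, ⟨x, hx, hpx, hxq⟩, ⟨y, hy, hy'⟩⟩ := h
  refine ⟨two_lt_card_iff.2 ⟨p, x, q, ?_, ?_, ?_, hpx.ne, hpq.ne, hxq.ne⟩, ?_⟩
  · simp [hp, hpq.le]
  · simp [hx, hpx.le, hxq.le]
  · simp [hq, hpq.le]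
  · exact filter_ssubset.2 ⟨y, hy, by rcases hy' with h | h <;> intro h' <;> order⟩

theorem IsDiagonal.filter_le_or_le (h : S.IsDiagonal p q) :
    3 ≤ (S.filter fun i => i ≤ p ∨ q ≤ i).card ∧ S.filter (fun i => i ≤ p ∨ q ≤ i) ⊂ S := by
  obtain ⟨hp, hq, hpq, ⟨x, hx, hpx, hxq⟩, ⟨y, hy, hy'⟩⟩ := h
  refine ⟨two_lt_card_iff.2 ⟨p, q, y, ?_, ?_, ?_, hpq.ne, ?_, ?_⟩, ?_⟩
  · simp [hp]
  · simp [hq]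
  · simp only [mem_filter]; exact ⟨hy, by rcases hy' with h | h; exacts [.inl h.le, .inr h.le]⟩
  · rcases hy' with h | h <;> order
  · rcases hy' with h | h <;> order
  · exact filter_ssubset.2 ⟨x, hx, by intro h'; rcases h' with h' | h' <;> order⟩

theorem isCyclicSucc_or_of_card_eq_three (hS : S.card = 3) (ha : a ∈ S) (hb : b ∈ S) (hab : a < b) :
    S.IsCyclicSucc a b ∨ S.IsCyclicSucc b a := by
  by_cases h : ∀ x ∈ S, x ≤ a ∨ b ≤ x
  · exact .inl ⟨ha, hb, .inl ⟨hab, h⟩⟩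
  push Not at h
  obtain ⟨c, hc, hac, hcb⟩ := h
  have hS' : {a, c, b} = S := eq_of_subset_of_card_le (by simp [insert_subset_iff, ha, hb, hc])
    (by rw [hS, card_eq_three.2 ⟨a, c, b, hac.ne, hab.ne, hcb.ne, rfl⟩])
  refine .inr ⟨hb, ha, .inr fun x hx => ?_⟩
  rw [← hS'] at hx
  simp only [mem_insert, mem_singleton] at hx
  rcases hx with rfl | rfl | rfl <;> exact ⟨by order, by order⟩

section CyclicEnum

variable {n : ℕ} [NeZero n]

def cyclicEnum (S : Finset ι) (h : S.card = n) (i : ZMod n) : ι :=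
  S.orderEmbOfFin h ⟨i.val, i.val_lt⟩

variable (h : S.card = n)

theorem cyclicEnum_mem (i : ZMod n) : S.cyclicEnum h i ∈ S :=
  orderEmbOfFin_mem S h _

theorem cyclicEnum_le_cyclicEnum {i j : ZMod n} :
    S.cyclicEnum h i ≤ S.cyclicEnum h j ↔ i.val ≤ j.val :=
  (S.orderEmbOfFin h).le_iff_le

theorem cyclicEnum_lt_cyclicEnum {i j : ZMod n} :
    S.cyclicEnum h i < S.cyclicEnum h j ↔ i.val < j.val :=
  (S.orderEmbOfFin h).lt_iff_lt

theorem exists_cyclicEnum_eq {x : ι} (hx : x ∈ S) : ∃ i, S.cyclicEnum h i = x := by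
  rw [← mem_coe, ← S.range_orderEmbOfFin h] at hx
  obtain ⟨r, rfl⟩ := hx
  exact ⟨r.val, by simp [cyclicEnum, ZMod.val_cast_of_lt r.isLt]⟩

theorem isCyclicSucc_cyclicEnum (i : ZMod n) :
    S.IsCyclicSucc (S.cyclicEnum h i) (S.cyclicEnum h (i + 1)) := by
  refine ⟨cyclicEnum_mem h i, cyclicEnum_mem h _, ?_⟩
  have hval := ZMod.val_add_one_eq_ite i
  have hi := i.val_lt
  split_ifs at hval with hlast
  · refine .inr fun x hx => ?_
    obtain ⟨j, rfl⟩ := exists_cyclicEnum_eq h hx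
    have := j.val_lt
    simp only [cyclicEnum_le_cyclicEnum, hval]
    omega
  · refine .inl ⟨(cyclicEnum_lt_cyclicEnum h).2 (by omega), fun x hx => ?_⟩
    obtain ⟨j, rfl⟩ := exists_cyclicEnum_eq h hx
    simp only [cyclicEnum_le_cyclicEnum, hval]
    omega

theorem isDiagonal_cyclicEnum {i j : ZMod n} (hij : i.val < j.val) (h₁ : j ≠ i + 1)
    (h₂ : i ≠ j + 1) : S.IsDiagonal (S.cyclicEnum h i) (S.cyclicEnum h j) := by
  have hj := j.val_lt
  have hi₁ : (i + 1).val = i.val + 1 := by rw [ZMod.val_add_one_eq_ite, if_neg (by omega)]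
  have hbetween : i.val + 1 < j.val :=
    lt_of_le_of_ne hij fun h => h₁ (ZMod.val_injective n (by rw [hi₁, h]))
  refine ⟨cyclicEnum_mem h i, cyclicEnum_mem h j, (cyclicEnum_lt_cyclicEnum h).2 hij,
    ⟨_, cyclicEnum_mem h (i + 1), by simp only [cyclicEnum_lt_cyclicEnum, hi₁]; omega⟩, ?_⟩
  by_cases hi₀ : i.val = 0
  · have hj₁ : j.val + 1 ≠ n := fun hlast => h₂ (ZMod.val_injective n (by
      rw [ZMod.val_add_one_eq_ite, if_pos hlast, hi₀]))
    have hj₁' : (j + 1).val = j.val + 1 := by rw [ZMod.val_add_one_eq_ite, if_neg hj₁]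
    exact ⟨_, cyclicEnum_mem h (j + 1),
      .inr (by simp only [cyclicEnum_lt_cyclicEnum, hj₁']; omega)⟩
  · exact ⟨_, cyclicEnum_mem h 0,
      .inl (by simp only [cyclicEnum_lt_cyclicEnum, ZMod.val_zero]; omega)⟩

end CyclicEnum

end Finset

namespace SimpComplex

variable {V : Type*} {X : SimpComplex V} {k : ℕ}

theorem singleton_mem_faces_of_pair_mem {a b : V} (h : ({a, b} : Finset V) ∈ X.faces) :
    ({a} : Finset V) ∈ X.faces :=
  X.down_closed h (by simp) (by simp)

theorem Flag.mem_faces_of_pair_mem (hX : X.Flag) {s : Finset V} (hs : s.Nonempty)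
    (h : ∀ a ∈ s, ∀ b ∈ s, ({a, b} : Finset V) ∈ X.faces) : s ∈ X.faces :=
  hX s hs (fun v hv => show ({v} : Finset V) ∈ X.faces by simpa using h v hv v hv)
    fun u hu v hv _ => h u hu v hv

theorem IsLarge.exists_diagonal_of_closedWalk {n : ℕ} (hX : X.IsLarge k) (hn : 4 ≤ n) (hnk : n < k)
    (c : ZMod n → V) (hc : ∀ i, ({c i, c (i + 1)} : Finset V) ∈ X.faces) :
    ∃ i j : ZMod n, j ≠ i - 1 ∧ j ≠ i ∧ j ≠ i + 1 ∧ ({c i, c j} : Finset V) ∈ X.faces := by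
  have : NeZero n := ⟨by omega⟩
  have hcast : ∀ a : ℕ, 0 < a → a < n → (a : ZMod n) ≠ 0 := fun a h₀ h => by
    rw [Ne, ← ZMod.val_eq_zero, ZMod.val_cast_of_lt h]
    omega
  by_cases hinj : Function.Injective c
  · have hcyc : X.IsCycle n c := ⟨by omega, hinj, fun i =>
      ⟨hinj.ne fun h => hcast 1 one_pos (by omega) (by push_cast; linear_combination -h), hc i⟩⟩
    obtain ⟨i, j, h₁, h₂, h₃, hadj⟩ := hX.2 n hn hnk c hcyc
    exact ⟨i, j, h₁, h₂, h₃, hadj.2⟩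
  obtain ⟨i, j, hij, hne⟩ : ∃ i j, c i = c j ∧ i ≠ j := by
    simpa [Function.Injective] using hinj
  -- a repeated edge `c l = c (l + 1)` makes `l - 1, l + 1` a diagonal
  by_cases hcons : j = i + 1 ∨ i = j + 1
  · obtain ⟨l, hl⟩ : ∃ l, c (l + 1) = c l := by
      rcases hcons with rfl | rfl
      exacts [⟨i, hij.symm⟩, ⟨j, hij⟩]
    refine ⟨l - 1, l + 1, fun h => hcast 3 (by norm_num) (by omega) ?_,
      fun h => hcast 2 (by norm_num) (by omega) ?_,
      fun h => hcast 1 (by norm_num) (by omega) ?_, ?_⟩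
    · push_cast; linear_combination h
    · push_cast; linear_combination h
    · push_cast; linear_combination h
    · rw [hl]
      simpa using hc (l - 1)
  · push Not at hcons
    refine ⟨i, j, fun h => hcons.2 (by rw [h]; ring), hne.symm, hcons.1, ?_⟩
    simpa [hij] using singleton_mem_faces_of_pair_mem (hc j)

variable {ι : Type*} [LinearOrder ι]

theorem IsLarge.exists_isDiagonal (hX : X.IsLarge k) (f : ι → V) {S : Finset ι}
    (h4 : 4 ≤ S.card) (hk : S.card < k)
    (hS : ∀ a b, S.IsCyclicSucc a b → ({f a, f b} : Finset V) ∈ X.faces) :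
    ∃ p q, S.IsDiagonal p q ∧ ({f p, f q} : Finset V) ∈ X.faces := by
  have : NeZero S.card := ⟨by omega⟩
  obtain ⟨i, j, h₁, h₂, h₃, hij⟩ := hX.exists_diagonal_of_closedWalk h4 hk (f ∘ S.cyclicEnum rfl)
    fun i => hS _ _ (Finset.isCyclicSucc_cyclicEnum rfl i)
  have h₁' : i ≠ j + 1 := fun h => h₁ (by rw [h]; ring)
  have hval : i.val ≠ j.val := fun h => h₂ (ZMod.val_injective _ h).symm
  rcases hval.lt_or_gt with hlt | hlt
  · exact ⟨_, _, Finset.isDiagonal_cyclicEnum rfl hlt h₃ h₁', hij⟩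
  · exact ⟨_, _, Finset.isDiagonal_cyclicEnum rfl hlt h₁' h₃, by rwa [Finset.pair_comm]⟩

theorem Flag.image_mem_faces_of_card_eq_three (hX : X.Flag) (f : ι → V) {S : Finset ι}
    (h3 : S.card = 3) (hS : ∀ a b, S.IsCyclicSucc a b → ({f a, f b} : Finset V) ∈ X.faces) :
    S.image f ∈ X.faces := by
  have hlt : ∀ a ∈ S, ∀ b ∈ S, a < b → ({f a, f b} : Finset V) ∈ X.faces := fun a ha b hb hab =>
    (Finset.isCyclicSucc_or_of_card_eq_three h3 ha hb hab).elim (hS a b) fun h => by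
      rw [Finset.pair_comm]; exact hS b a h
  have hne : ∀ a ∈ S, ∀ b ∈ S, a ≠ b → ({f a, f b} : Finset V) ∈ X.faces := fun a ha b hb hab =>
    hab.lt_or_gt.elim (hlt a ha b hb) fun h => by rw [Finset.pair_comm]; exact hlt b hb a ha h
  refine hX.mem_faces_of_pair_mem (Finset.card_pos.1 (by omega) |>.image f) ?_
  simp only [Finset.mem_image]
  rintro _ ⟨a, ha, rfl⟩ _ ⟨b, hb, rfl⟩
  by_cases hab : a = b
  · obtain ⟨c, hc, hca⟩ := S.exists_mem_ne (by omega) a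
    simpa [hab] using singleton_mem_faces_of_pair_mem (hne b (hab ▸ ha) c hc (hab ▸ hca.symm))
  · exact hne a ha b hb hab

theorem IsLarge.exists_isTriangulation {θ : ι → ℝ} (hX : X.IsLarge k) (hθ : StrictMono θ)
    (hθ₂π : ∀ i j, θ i < θ j + 2 * π) (f : ι → V) (S : Finset ι) (h3 : 3 ≤ S.card)
    (hk : S.card < k) (hS : ∀ a b, S.IsCyclicSucc a b → ({f a, f b} : Finset V) ∈ X.faces) :
    ∃ T, IsTriangulation (unitVec ∘ θ) S T ∧ ∀ t ∈ T, t.image f ∈ X.faces := by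
  induction S using Finset.strongInduction with | H S ih =>
  rcases h3.eq_or_lt with h3 | h4
  · exact ⟨{S}, isTriangulation_singleton _ h3.symm,
      by simpa using hX.1.image_mem_faces_of_card_eq_three f h3.symm hS⟩
  obtain ⟨p, q, hpq, hfpq⟩ := hX.exists_isDiagonal f h4 hk hS
  obtain ⟨h3₁, hS₁⟩ := hpq.filter_le_and_le
  obtain ⟨h3₂, hS₂⟩ := hpq.filter_le_or_le
  obtain ⟨T₁, hT₁, hf₁⟩ := ih _ hS₁ h3₁ ((Finset.card_lt_card hS₁).trans hk) fun a b hab =>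
    (Finset.IsCyclicSucc.of_filter_le_and_le hpq.1 hpq.2.1 hab).elim (hS a b)
      fun ⟨ha, hb⟩ => by rw [ha, hb, Finset.pair_comm]; exact hfpq
  obtain ⟨T₂, hT₂, hf₂⟩ := ih _ hS₂ h3₂ ((Finset.card_lt_card hS₂).trans hk) fun a b hab =>
    (Finset.IsCyclicSucc.of_filter_le_or_le hpq.1 hpq.2.1 hpq.2.2.1 hab).elim (hS a b)
      fun ⟨ha, hb⟩ => by rw [ha, hb]; exact hfpq
  refine ⟨T₁ ∪ T₂, hT₁.of_split hθ hθ₂π hpq.1 hpq.2.1 hpq.2.2.1 hT₂, fun t ht => ?_⟩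
  rcases Finset.mem_union.1 ht with ht | ht
  exacts [hf₁ t ht, hf₂ t ht]

end SimpComplex

theorem ZMod.eq_add_one_of_isCyclicSucc_univ {m : ℕ} [NeZero m] [LinearOrder (ZMod m)]
    (hle : ∀ a b : ZMod m, a ≤ b ↔ a.val ≤ b.val) {a b : ZMod m}
    (h : Finset.univ.IsCyclicSucc a b) : b = a + 1 := by
  have ha := a.val_lt
  obtain ⟨-, -, ⟨hab, h⟩ | h⟩ := h
  · rw [lt_iff_not_ge, hle, not_le] at hab
    have ha₁ : (a + 1).val = a.val + 1 := by
      rw [ZMod.val_add_one_eq_ite, if_neg (by have := b.val_lt; omega)]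
    have := h (a + 1) (Finset.mem_univ _)
    rw [hle, hle, ha₁] at this
    exact ZMod.val_injective m (by omega)
  · have h₀ := (h 0 (Finset.mem_univ _)).1
    have h₁ := (h ((m - 1 : ℕ) : ZMod m) (Finset.mem_univ _)).2
    rw [hle, ZMod.val_zero] at h₀
    rw [hle, ZMod.val_cast_of_lt (by omega)] at h₁
    exact ZMod.val_injective m (by rw [ZMod.val_add_one_eq_ite, if_pos (by omega)]; omega)

theorem klarge_extension_general {V : Type} (X : SimpComplex V) (k m : ℕ)
    (hX : X.IsLarge k) (hm : 3 ≤ m) (hmk : m < k)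
    (f : ZMod m → V)
    (hf : ∀ i : ZMod m, ({f i, f (i + 1)} : Finset V) ∈ X.faces) :
    ∃ T : Finset (Finset (ZMod m)),
      (∀ s ∈ T, s.card = 3) ∧
      (∀ s ∈ T, s.image f ∈ X.faces) ∧
      (⋃ s ∈ T, convexHull ℝ (polyVertex m '' ↑s)) =
        convexHull ℝ (Set.range (polyVertex m)) ∧
      (∀ s₁ ∈ T, ∀ s₂ ∈ T, s₁ ≠ s₂ →
        interior (convexHull ℝ (polyVertex m '' ↑s₁)) ∩
          interior (convexHull ℝ (polyVertex m '' ↑s₂)) = ∅) := by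
  have : NeZero m := ⟨by omega⟩
  let _ : LinearOrder (ZMod m) := LinearOrder.lift' ZMod.val (ZMod.val_injective m)
  set θ : ZMod m → ℝ := fun i => 2 * π * i.val / m
  have hm₀ : (0 : ℝ) < m := by exact_mod_cast (by omega : 0 < m)
  have hθ : StrictMono θ := fun i j (hij : i.val < j.val) => by simp only [θ]; gcongr
  have hθ₂π : ∀ i j, θ i < θ j + 2 * π := fun i j => by
    have : θ i < 2 * π := by
      simp only [θ]
      rw [div_lt_iff₀ hm₀]
      gcongr
      exact_mod_cast i.val_lt
    have : 0 ≤ θ j := by positivity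
    linarith
  obtain ⟨T, ⟨hT, hcover, hdisj⟩, hfaces⟩ := hX.exists_isTriangulation hθ hθ₂π f Finset.univ
    (by simpa using hm) (by simpa using hmk)
    fun a b hab => ZMod.eq_add_one_of_isCyclicSucc_univ (fun _ _ => Iff.rfl) hab ▸ hf a
  have hP : polyVertex m = unitVec ∘ θ := rfl
  refine ⟨T, fun s hs => (hT s hs).1, hfaces, ?_, fun s₁ h₁ s₂ h₂ hne => (hdisj h₁ h₂ hne).inter_eq⟩
  rw [hP, ← image_univ, ← Finset.coe_univ]
  exact hcover

/-- **Lemma 5.2** (Januszkiewicz–Świątkowski, Lemma 1.3).  If `X` is `k`-large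
and `m < k`, then every simplicial map `f : S¹_m → X` extends to a simplicial
map from a disc `D²` triangulated with boundary `S¹_m` and without interior
vertices; equivalently, there is a triangulation of the regular `m`-gon using
only its boundary vertices, each of whose triangles is mapped by `f` to a
simplex of `X`. -/
theorem klarge_extension {V : Type} (X : SimpComplex V) (k m : ℕ)
    (hX : X.IsLarge k) (hm : 3 ≤ m) (hmk : m < k)
    (f : ZMod m → V)
    (hf0 : ∀ i : ZMod m, ({f i} : Finset V) ∈ X.faces)
    (hf : ∀ i : ZMod m, ({f i, f (i + 1)} : Finset V) ∈ X.faces) :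
    ∃ T : Finset (Finset (ZMod m)),
      (∀ s ∈ T, s.card = 3) ∧
      (∀ s ∈ T, s.image f ∈ X.faces) ∧
      (⋃ s ∈ T, convexHull ℝ (polyVertex m '' ↑s)) =
        convexHull ℝ (Set.range (polyVertex m)) ∧
      (∀ s₁ ∈ T, ∀ s₂ ∈ T, s₁ ≠ s₂ →
        interior (convexHull ℝ (polyVertex m '' ↑s₁)) ∩
          interior (convexHull ℝ (polyVertex m '' ↑s₂)) = ∅) :=
  klarge_extension_general X k m hX hm hmk f hf
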